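/- arXiv:2307.10840 — 2 statements merged into one kernel-verified Lean document; each statement's English description precedes it below -/
import Mathlib

section
/- Fix an integer l ≥ 2 and define p : ℕ × ℕ → ℤ by p(k₁l + k₀, N) = ∑_{n≥0} t((k₁+2n)l + k₀, N) − ∑_{m≥0} t((k₁+2m+2)l − k₀ − 2, N) for k₀ ∈ {0,...,l-2}, and p(k₁l + (l-1), N) = t(k₁l + l - 1, N), where t satisfies t(k,0) = [k=1], t(-1,·) = 0, t(k,N) = t(k-1,N-1) + t(k+1,N-1). Then for all k₁ ≥ 0 and N ≥ 1: if k₀ ∈ {0,...,l-3} then p(k₁l+k₀, N) = p(k₁l+k₀-1, N-1) + p(k₁l+k₀+1, N-1), and p(k₁l + (l-2), N) = p(k₁l + l - 3, N-1). -/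
/-- `t(k,N)`, the number of Catalan paths of length `N` ending at height `k`,
defined by `t(k,0) = [k = 1]`, `t(k,N) = t(k-1,N-1) + t(k+1,N-1)` with `t(-1,·) = 0`. -/
def t : ℕ → ℕ → ℕ
  | k, 0 => if k = 1 then 1 else 0
  | 0, N + 1 => t 1 N
  | k + 1, N + 1 => t k N + t (k + 2) N

/-- The tilting multiplicity `p(k,N)` for `k = k₁·l + k₀`:
`p(k₁l + (l-1), N) = t(k₁l + l - 1, N)` and, for `k₀ ∈ {0,...,l-2}`,
`p(k₁l + k₀, N) = ∑_{n≥0} t((k₁+2n)l + k₀, N) − ∑_{m≥0} t((k₁+2m+2)l − k₀ − 2, N)`. -/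
noncomputable def p (l : ℕ) (k N : ℕ) : ℤ :=
  if k % l = l - 1 then (t k N : ℤ)
  else (∑' n : ℕ, (t (k + 2 * n * l) N : ℤ)) -
    ∑' m : ℕ, (t ((k / l + 2 * m + 2) * l - k % l - 2) N : ℤ)

/-- `p` extended to integer weights by the convention `p(k,N) = 0` for `k < 0`. -/
noncomputable def pZ (l : ℕ) (k : ℤ) (N : ℕ) : ℤ :=
  if k < 0 then 0 else p l k.toNat N

lemma t_eq_zero : ∀ N k, N + 1 < k → t k N = 0
  | 0, k+2, _ => by show (if k+2 = 1 then 1 else 0) = 0; simp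
  | N+1, k+2, h => by
      show t (k+1) N + t (k+3) N = 0
      rw [t_eq_zero N (k+1) (by omega), t_eq_zero N (k+3) (by omega)]

lemma t_rec (j M : ℕ) : t (j+1) (M+1) = t j M + t (j+2) M := rfl

lemma t_rec0 (M : ℕ) : t 0 (M+1) = t 1 M := rfl

lemma summable_t (g : ℕ → ℕ) (N : ℕ) (hg : ∀ n, n ≤ g n) :
    Summable (fun n => (t (g n) N : ℤ)) := by
  apply summable_of_ne_finset_zero (s := Finset.range (N+2))
  intro n hn
  simp only [Finset.mem_range, not_lt] at hn
  have := hg n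
  rw [t_eq_zero N (g n) (by omega)]
  simp

lemma tsum_t_rec (g : ℕ → ℕ) (M : ℕ) (hg : ∀ n, n + 1 ≤ g n) :
    ∑' n, (t (g n) (M+1) : ℤ) =
      (∑' n, (t (g n - 1) M : ℤ)) + ∑' n, (t (g n + 1) M : ℤ) := by
  rw [← Summable.tsum_add (summable_t _ M fun n => by have := hg n; omega)
        (summable_t _ M fun n => by have := hg n; omega)]
  refine tsum_congr fun n => ?_
  obtain ⟨j, hj⟩ : ∃ j, g n = j + 1 := ⟨g n - 1, by have := hg n; omega⟩
  rw [hj, t_rec]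
  push_cast [Nat.add_sub_cancel]
  ring

lemma tsum_shift (g : ℕ → ℕ) (M : ℕ) (hg : ∀ n, n ≤ g n) :
    ∑' n, (t (g n) M : ℤ) = (t (g 0) M : ℤ) + ∑' n, (t (g (n+1)) M : ℤ) :=
  Summable.tsum_eq_zero_add (summable_t g M hg)

lemma p_eq (l : ℕ) (hl : 2 ≤ l) (k₁ k₀ : ℕ) (h : k₀ < l - 1) (N : ℕ) :
    p l (k₁ * l + k₀) N =
      (∑' n : ℕ, (t ((k₁ + 2*n) * l + k₀) N : ℤ)) -
        ∑' m : ℕ, (t ((k₁ + 2*m + 2) * l - k₀ - 2) N : ℤ) := by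
  have hmod : (k₁ * l + k₀) % l = k₀ := by
    rw [Nat.mul_add_mod']; exact Nat.mod_eq_of_lt (by omega)
  have hdiv : (k₁ * l + k₀) / l = k₁ := by
    rw [mul_comm, Nat.mul_add_div (by omega), Nat.div_eq_of_lt (by omega), add_zero]
  simp only [p, hmod, hdiv, if_neg (show ¬ k₀ = l - 1 by omega)]
  congr 1
  exact tsum_congr fun n => by rw [show k₁ * l + k₀ + 2*n*l = (k₁+2*n)*l + k₀ by ring]

lemma p_last (l : ℕ) (hl : 1 ≤ l) (k₁ N : ℕ) :
    p l (k₁ * l + (l - 1)) N = t (k₁ * l + (l - 1)) N := by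
  have hmod : (k₁ * l + (l-1)) % l = l - 1 := by
    rw [Nat.mul_add_mod']; exact Nat.mod_eq_of_lt (by omega)
  simp only [p, hmod]
  simp

lemma pZ_nat (l k N : ℕ) : pZ l (k : ℤ) N = p l k N := by simp [pZ]

lemma le_mul_of_le (n a l : ℕ) (hl : 1 ≤ l) (h : n ≤ a) : n ≤ a * l :=
  le_trans h (Nat.le_mul_of_pos_right a hl)

lemma aux_add_le_mul (m a l : ℕ) (hl : 2 ≤ l) (h : m + 2 ≤ a) : m + l + 2 ≤ a * l := by
  have h5 : (m+2)*l ≤ a*l := Nat.mul_le_mul_right _ h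
  have h7 : m ≤ m*l := le_mul_of_le m m l (by omega) le_rfl
  have h6 : (m+2)*l = m*l + 2*l := by ring
  omega

theorem stmt_6 (l : ℕ) (hl : 2 ≤ l) (k₁ N : ℕ) (hN : 1 ≤ N) :
    (∀ k₀ : ℕ, (k₀ : ℤ) ≤ (l : ℤ) - 3 →
      p l (k₁ * l + k₀) N =
        pZ l ((k₁ * l + k₀ : ℤ) - 1) (N - 1) + p l (k₁ * l + k₀ + 1) (N - 1)) ∧
    p l (k₁ * l + (l - 2)) N = pZ l ((k₁ * l : ℤ) + l - 3) (N - 1) := by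
  obtain ⟨M, rfl⟩ : ∃ M, N = M + 1 := ⟨N - 1, by omega⟩
  simp only [Nat.add_sub_cancel]
  constructor
  · intro k₀ hk₀
    have hl3 : k₀ + 3 ≤ l := by omega
    rcases Nat.eq_zero_or_pos k₀ with rfl | hk₀1
    · -- k₀ = 0 (so l ≥ 3)
      rcases Nat.eq_zero_or_pos k₁ with rfl | hk₁1
      · -- k₁ = 0
        have hpz : pZ l (((0:ℕ):ℤ) * (l:ℤ) + ((0:ℕ):ℤ) - 1) M = 0 := by
          rw [pZ, if_pos (by push_cast; omega)]
        have h1 := p_eq l hl 0 0 (by omega) (M+1)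
        have h3 : p l (0 * l + 0 + 1) M =
            (∑' n : ℕ, (t ((0 + 2*n) * l + 1) M : ℤ)) -
              ∑' m : ℕ, (t ((0 + 2*m + 2) * l - 1 - 2) M : ℤ) :=
          p_eq l hl 0 1 (by omega) M
        have hs : (∑' n : ℕ, (t ((0 + 2*n) * l + 0) (M+1) : ℤ)) =
            (t ((0 + 2*0) * l + 0) (M+1) : ℤ) +
              ∑' n : ℕ, (t ((0 + 2*(n+1)) * l + 0) (M+1) : ℤ) :=
          tsum_shift _ _ (fun n => by
            have := le_mul_of_le n (0+2*n) l (by omega) (by omega); omega)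
        have ht0 : (t ((0 + 2*0) * l + 0) (M+1) : ℤ) = (t 1 M : ℤ) := by
          rw [show (0 + 2*0) * l + 0 = 0 by simp]
          exact_mod_cast t_rec0 M
        have hA : (∑' n : ℕ, (t ((0 + 2*(n+1)) * l + 0) (M+1) : ℤ)) =
            (∑' n : ℕ, (t ((0 + 2*(n+1)) * l + 0 - 1) M : ℤ)) +
              ∑' n : ℕ, (t ((0 + 2*(n+1)) * l + 0 + 1) M : ℤ) :=
          tsum_t_rec _ M (fun n => by
            have := le_mul_of_le (n+1) (0+2*(n+1)) l (by omega) (by omega); omega)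
        have hB : (∑' m : ℕ, (t ((0 + 2*m + 2) * l - 0 - 2) (M+1) : ℤ)) =
            (∑' m : ℕ, (t ((0 + 2*m + 2) * l - 0 - 2 - 1) M : ℤ)) +
              ∑' m : ℕ, (t ((0 + 2*m + 2) * l - 0 - 2 + 1) M : ℤ) :=
          tsum_t_rec _ M (fun m => by
            have := aux_add_le_mul m (0+2*m+2) l hl (by omega); omega)
        have hs' : (∑' n : ℕ, (t ((0 + 2*n) * l + 1) M : ℤ)) =
            (t ((0 + 2*0) * l + 1) M : ℤ) +
              ∑' n : ℕ, (t ((0 + 2*(n+1)) * l + 1) M : ℤ) :=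
          tsum_shift _ _ (fun n => by
            have := le_mul_of_le n (0+2*n) l (by omega) (by omega); omega)
        have ht1 : (t ((0 + 2*0) * l + 1) M : ℤ) = (t 1 M : ℤ) := by
          rw [show (0 + 2*0) * l + 1 = 1 by simp]
        have c1 : (∑' n : ℕ, (t ((0 + 2*(n+1)) * l + 0 - 1) M : ℤ)) =
            ∑' m : ℕ, (t ((0 + 2*m + 2) * l - 0 - 2 + 1) M : ℤ) :=
          tsum_congr fun m => by
            have e : (0 + 2*(m+1)) * l = (0 + 2*m + 2) * l := by ring
            have hb := aux_add_le_mul 0 (0+2*m+2) l hl (by omega)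
            rw [show (0 + 2*(m+1)) * l + 0 - 1 = (0 + 2*m + 2) * l - 0 - 2 + 1 by omega]
        have c2 : (∑' n : ℕ, (t ((0 + 2*(n+1)) * l + 0 + 1) M : ℤ)) =
            ∑' n : ℕ, (t ((0 + 2*(n+1)) * l + 1) M : ℤ) :=
          tsum_congr fun n => by
            rw [show (0 + 2*(n+1)) * l + 0 + 1 = (0 + 2*(n+1)) * l + 1 by omega]
        have c3 : (∑' m : ℕ, (t ((0 + 2*m + 2) * l - 0 - 2 - 1) M : ℤ)) =
            ∑' m : ℕ, (t ((0 + 2*m + 2) * l - 1 - 2) M : ℤ) :=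
          tsum_congr fun m => by
            rw [show (0 + 2*m + 2) * l - 0 - 2 - 1 = (0 + 2*m + 2) * l - 1 - 2 by omega]
        rw [h1, h3, hpz, hs, ht0, hA, hB, hs', ht1, c1, c2, c3]
        ring
      · -- k₁ ≥ 1
        obtain ⟨j, rfl⟩ : ∃ j, k₁ = j + 1 := ⟨k₁ - 1, by omega⟩
        have hpz : pZ l (((j+1:ℕ):ℤ) * (l:ℤ) + ((0:ℕ):ℤ) - 1) M = (t ((j+1) * l - 1) M : ℤ) := by
          rw [show (((j+1:ℕ):ℤ) * (l:ℤ) + ((0:ℕ):ℤ) - 1) = (((j+1) * l - 1 : ℕ) : ℤ) by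
            rw [Nat.cast_sub (Nat.one_le_iff_ne_zero.mpr (Nat.mul_ne_zero (by omega) (by omega)))]
            push_cast; ring]
          rw [pZ_nat]
          rw [show (j+1) * l - 1 = j * l + (l - 1) by
            have e : (j+1) * l = j * l + l := by ring
            omega]
          exact p_last l (by omega) j M
        have h1 := p_eq l hl (j+1) 0 (by omega) (M+1)
        have h3 : p l ((j+1) * l + 0 + 1) M =
            (∑' n : ℕ, (t (((j+1) + 2*n) * l + 1) M : ℤ)) -
              ∑' m : ℕ, (t (((j+1) + 2*m + 2) * l - 1 - 2) M : ℤ) :=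
          p_eq l hl (j+1) 1 (by omega) M
        have hA : (∑' n : ℕ, (t (((j+1) + 2*n) * l + 0) (M+1) : ℤ)) =
            (∑' n : ℕ, (t (((j+1) + 2*n) * l + 0 - 1) M : ℤ)) +
              ∑' n : ℕ, (t (((j+1) + 2*n) * l + 0 + 1) M : ℤ) :=
          tsum_t_rec _ M (fun n => by
            have := le_mul_of_le (n+1) ((j+1)+2*n) l (by omega) (by omega); omega)
        have hB : (∑' m : ℕ, (t (((j+1) + 2*m + 2) * l - 0 - 2) (M+1) : ℤ)) =
            (∑' m : ℕ, (t (((j+1) + 2*m + 2) * l - 0 - 2 - 1) M : ℤ)) +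
              ∑' m : ℕ, (t (((j+1) + 2*m + 2) * l - 0 - 2 + 1) M : ℤ) :=
          tsum_t_rec _ M (fun m => by
            have := aux_add_le_mul m ((j+1)+2*m+2) l hl (by omega); omega)
        have hs : (∑' n : ℕ, (t (((j+1) + 2*n) * l + 0 - 1) M : ℤ)) =
            (t (((j+1) + 2*0) * l + 0 - 1) M : ℤ) +
              ∑' n : ℕ, (t (((j+1) + 2*(n+1)) * l + 0 - 1) M : ℤ) :=
          tsum_shift _ _ (fun n => by
            have := le_mul_of_le (n+1) ((j+1)+2*n) l (by omega) (by omega); omega)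
        have ht0 : (t (((j+1) + 2*0) * l + 0 - 1) M : ℤ) = (t ((j+1) * l - 1) M : ℤ) := by
          have e : ((j+1) + 2*0) * l = (j+1) * l := by ring
          rw [show ((j+1) + 2*0) * l + 0 - 1 = (j+1) * l - 1 by omega]
        have c1 : (∑' n : ℕ, (t (((j+1) + 2*(n+1)) * l + 0 - 1) M : ℤ)) =
            ∑' m : ℕ, (t (((j+1) + 2*m + 2) * l - 0 - 2 + 1) M : ℤ) :=
          tsum_congr fun m => by
            have e : ((j+1) + 2*(m+1)) * l = ((j+1) + 2*m + 2) * l := by ring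
            have hb := aux_add_le_mul 0 ((j+1)+2*m+2) l hl (by omega)
            rw [show ((j+1) + 2*(m+1)) * l + 0 - 1 = ((j+1) + 2*m + 2) * l - 0 - 2 + 1 by omega]
        have c2 : (∑' n : ℕ, (t (((j+1) + 2*n) * l + 0 + 1) M : ℤ)) =
            ∑' n : ℕ, (t (((j+1) + 2*n) * l + 1) M : ℤ) :=
          tsum_congr fun n => by
            rw [show ((j+1) + 2*n) * l + 0 + 1 = ((j+1) + 2*n) * l + 1 by omega]
        have c3 : (∑' m : ℕ, (t (((j+1) + 2*m + 2) * l - 0 - 2 - 1) M : ℤ)) =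
            ∑' m : ℕ, (t (((j+1) + 2*m + 2) * l - 1 - 2) M : ℤ) :=
          tsum_congr fun m => by
            rw [show ((j+1) + 2*m + 2) * l - 0 - 2 - 1 = ((j+1) + 2*m + 2) * l - 1 - 2 by omega]
        rw [h1, h3, hpz, hA, hB, hs, ht0, c1, c2, c3]
        ring
    · -- k₀ ≥ 1
      have hpz : pZ l ((k₁:ℤ) * (l:ℤ) + (k₀:ℤ) - 1) M = p l (k₁ * l + (k₀ - 1)) M := by
        rw [show ((k₁:ℤ) * (l:ℤ) + (k₀:ℤ) - 1) = ((k₁ * l + (k₀ - 1) : ℕ) : ℤ) by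
          push_cast [Nat.cast_sub hk₀1]; ring]
        exact pZ_nat _ _ _
      have h1 := p_eq l hl k₁ k₀ (by omega) (M+1)
      have h2 := p_eq l hl k₁ (k₀-1) (by omega) M
      have h3 : p l (k₁ * l + k₀ + 1) M =
          (∑' n : ℕ, (t ((k₁ + 2*n) * l + (k₀+1)) M : ℤ)) -
            ∑' m : ℕ, (t ((k₁ + 2*m + 2) * l - (k₀+1) - 2) M : ℤ) :=
        p_eq l hl k₁ (k₀+1) (by omega) M
      have hA : (∑' n : ℕ, (t ((k₁ + 2*n) * l + k₀) (M+1) : ℤ)) =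
          (∑' n : ℕ, (t ((k₁ + 2*n) * l + k₀ - 1) M : ℤ)) +
            ∑' n : ℕ, (t ((k₁ + 2*n) * l + k₀ + 1) M : ℤ) :=
        tsum_t_rec _ M (fun n => by
          have := le_mul_of_le n (k₁+2*n) l (by omega) (by omega); omega)
      have hB : (∑' m : ℕ, (t ((k₁ + 2*m + 2) * l - k₀ - 2) (M+1) : ℤ)) =
          (∑' m : ℕ, (t ((k₁ + 2*m + 2) * l - k₀ - 2 - 1) M : ℤ)) +
            ∑' m : ℕ, (t ((k₁ + 2*m + 2) * l - k₀ - 2 + 1) M : ℤ) :=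
        tsum_t_rec _ M (fun m => by
          have := aux_add_le_mul m (k₁+2*m+2) l hl (by omega); omega)
      have c1 : (∑' m : ℕ, (t ((k₁ + 2*m + 2) * l - k₀ - 2 - 1) M : ℤ)) =
          ∑' m : ℕ, (t ((k₁ + 2*m + 2) * l - (k₀+1) - 2) M : ℤ) :=
        tsum_congr fun m => by
          rw [show (k₁ + 2*m + 2) * l - k₀ - 2 - 1 = (k₁ + 2*m + 2) * l - (k₀+1) - 2 by omega]
      have c2 : (∑' m : ℕ, (t ((k₁ + 2*m + 2) * l - k₀ - 2 + 1) M : ℤ)) =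
          ∑' m : ℕ, (t ((k₁ + 2*m + 2) * l - (k₀-1) - 2) M : ℤ) :=
        tsum_congr fun m => by
          have hb := aux_add_le_mul 0 (k₁+2*m+2) l hl (by omega)
          rw [show (k₁ + 2*m + 2) * l - k₀ - 2 + 1 = (k₁ + 2*m + 2) * l - (k₀-1) - 2 by omega]
      have c3 : (∑' n : ℕ, (t ((k₁ + 2*n) * l + (k₀-1)) M : ℤ)) =
          ∑' n : ℕ, (t ((k₁ + 2*n) * l + k₀ - 1) M : ℤ) :=
        tsum_congr fun n => by
          rw [show (k₁ + 2*n) * l + (k₀-1) = (k₁ + 2*n) * l + k₀ - 1 by omega]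
      have c4 : (∑' n : ℕ, (t ((k₁ + 2*n) * l + (k₀+1)) M : ℤ)) =
          ∑' n : ℕ, (t ((k₁ + 2*n) * l + k₀ + 1) M : ℤ) :=
        tsum_congr fun n => by
          rw [show (k₁ + 2*n) * l + (k₀+1) = (k₁ + 2*n) * l + k₀ + 1 by omega]
      rw [h1, hpz, h2, h3, hA, hB, c1, c2, c3, c4]
      ring
  · -- part 2
    rcases Nat.lt_or_ge l 3 with h2 | h3
    · -- l = 2
      obtain rfl : l = 2 := by omega
      rcases Nat.eq_zero_or_pos k₁ with rfl | hk₁1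
      · -- k₁ = 0
        have hpz : pZ 2 (((0:ℕ):ℤ) * ((2:ℕ):ℤ) + ((2:ℕ):ℤ) - 3) M = 0 := by
          rw [pZ, if_pos (by norm_num)]
        have h1 := p_eq 2 (by norm_num) 0 (2-2) (by norm_num) (M+1)
        have cL1 : (∑' n : ℕ, (t ((0 + 2*n) * 2 + (2-2)) (M+1) : ℤ)) =
            ∑' n : ℕ, (t (4*n) (M+1) : ℤ) :=
          tsum_congr fun n => by
            rw [show (0 + 2*n) * 2 + (2-2) = 4*n by omega]
        have cL2 : (∑' m : ℕ, (t ((0 + 2*m + 2) * 2 - (2-2) - 2) (M+1) : ℤ)) =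
            ∑' m : ℕ, (t (4*m+2) (M+1) : ℤ) :=
          tsum_congr fun m => by
            rw [show (0 + 2*m + 2) * 2 - (2-2) - 2 = 4*m+2 by omega]
        have hs : (∑' n : ℕ, (t (4*n) (M+1) : ℤ)) =
            (t (4*0) (M+1) : ℤ) + ∑' n : ℕ, (t (4*(n+1)) (M+1) : ℤ) :=
          tsum_shift _ _ (fun n => by omega)
        have ht0 : (t (4*0) (M+1) : ℤ) = (t 1 M : ℤ) := by
          rw [show (4*0 : ℕ) = 0 by norm_num]
          exact_mod_cast t_rec0 M
        have hA : (∑' n : ℕ, (t (4*(n+1)) (M+1) : ℤ)) =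
            (∑' n : ℕ, (t (4*(n+1) - 1) M : ℤ)) + ∑' n : ℕ, (t (4*(n+1) + 1) M : ℤ) :=
          tsum_t_rec _ M (fun n => by omega)
        have hB : (∑' m : ℕ, (t (4*m+2) (M+1) : ℤ)) =
            (∑' m : ℕ, (t (4*m+2 - 1) M : ℤ)) + ∑' m : ℕ, (t (4*m+2 + 1) M : ℤ) :=
          tsum_t_rec _ M (fun m => by omega)
        have c1 : (∑' n : ℕ, (t (4*(n+1) - 1) M : ℤ)) =
            ∑' m : ℕ, (t (4*m+2 + 1) M : ℤ) :=
          tsum_congr fun m => by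
            rw [show 4*(m+1) - 1 = 4*m+2 + 1 by omega]
        have hs' : (∑' m : ℕ, (t (4*m+2 - 1) M : ℤ)) =
            (t (4*0+2 - 1) M : ℤ) + ∑' m : ℕ, (t (4*(m+1)+2 - 1) M : ℤ) :=
          tsum_shift _ _ (fun m => by omega)
        have ht1 : (t (4*0+2 - 1) M : ℤ) = (t 1 M : ℤ) := by
          rw [show (4*0+2 - 1 : ℕ) = 1 by norm_num]
        have c2 : (∑' m : ℕ, (t (4*(m+1)+2 - 1) M : ℤ)) =
            ∑' n : ℕ, (t (4*(n+1) + 1) M : ℤ) :=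
          tsum_congr fun n => by
            rw [show 4*(n+1)+2 - 1 = 4*(n+1) + 1 by omega]
        rw [h1, hpz, cL1, cL2, hs, ht0, hA, hB, c1, hs', ht1, c2]
        ring
      · -- k₁ ≥ 1
        obtain ⟨j, rfl⟩ : ∃ j, k₁ = j + 1 := ⟨k₁ - 1, by omega⟩
        have hpz : pZ 2 (((j+1:ℕ):ℤ) * ((2:ℕ):ℤ) + ((2:ℕ):ℤ) - 3) M = (t (2*j+1) M : ℤ) := by
          rw [show (((j+1:ℕ):ℤ) * ((2:ℕ):ℤ) + ((2:ℕ):ℤ) - 3) = ((2*j+1 : ℕ) : ℤ) by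
            push_cast; ring]
          rw [pZ_nat]
          rw [show 2*j+1 = j*2 + (2-1) by omega]
          exact p_last 2 (by norm_num) j M
        have h1 := p_eq 2 (by norm_num) (j+1) (2-2) (by norm_num) (M+1)
        have cL1 : (∑' n : ℕ, (t (((j+1) + 2*n) * 2 + (2-2)) (M+1) : ℤ)) =
            ∑' n : ℕ, (t (2*j+2+4*n) (M+1) : ℤ) :=
          tsum_congr fun n => by
            rw [show ((j+1) + 2*n) * 2 + (2-2) = 2*j+2+4*n by omega]
        have cL2 : (∑' m : ℕ, (t (((j+1) + 2*m + 2) * 2 - (2-2) - 2) (M+1) : ℤ)) =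
            ∑' m : ℕ, (t (2*j+4*m+4) (M+1) : ℤ) :=
          tsum_congr fun m => by
            rw [show ((j+1) + 2*m + 2) * 2 - (2-2) - 2 = 2*j+4*m+4 by omega]
        have hA : (∑' n : ℕ, (t (2*j+2+4*n) (M+1) : ℤ)) =
            (∑' n : ℕ, (t (2*j+2+4*n - 1) M : ℤ)) + ∑' n : ℕ, (t (2*j+2+4*n + 1) M : ℤ) :=
          tsum_t_rec _ M (fun n => by omega)
        have hB : (∑' m : ℕ, (t (2*j+4*m+4) (M+1) : ℤ)) =
            (∑' m : ℕ, (t (2*j+4*m+4 - 1) M : ℤ)) + ∑' m : ℕ, (t (2*j+4*m+4 + 1) M : ℤ) :=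
          tsum_t_rec _ M (fun m => by omega)
        have hs : (∑' n : ℕ, (t (2*j+2+4*n - 1) M : ℤ)) =
            (t (2*j+2+4*0 - 1) M : ℤ) + ∑' n : ℕ, (t (2*j+2+4*(n+1) - 1) M : ℤ) :=
          tsum_shift _ _ (fun n => by omega)
        have ht0 : (t (2*j+2+4*0 - 1) M : ℤ) = (t (2*j+1) M : ℤ) := by
          rw [show 2*j+2+4*0 - 1 = 2*j+1 by omega]
        have c1 : (∑' n : ℕ, (t (2*j+2+4*(n+1) - 1) M : ℤ)) =
            ∑' m : ℕ, (t (2*j+4*m+4 + 1) M : ℤ) :=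
          tsum_congr fun m => by
            rw [show 2*j+2+4*(m+1) - 1 = 2*j+4*m+4 + 1 by omega]
        have c2 : (∑' n : ℕ, (t (2*j+2+4*n + 1) M : ℤ)) =
            ∑' m : ℕ, (t (2*j+4*m+4 - 1) M : ℤ) :=
          tsum_congr fun m => by
            rw [show 2*j+2+4*m + 1 = 2*j+4*m+4 - 1 by omega]
        rw [h1, hpz, cL1, cL2, hA, hB, hs, ht0, c1, c2]
        ring
    · -- l ≥ 3
      have hpz : pZ l ((k₁:ℤ) * (l:ℤ) + (l:ℤ) - 3) M = p l (k₁ * l + (l - 3)) M := by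
        rw [show ((k₁:ℤ) * (l:ℤ) + (l:ℤ) - 3) = ((k₁ * l + (l - 3) : ℕ) : ℤ) by
          push_cast [Nat.cast_sub h3]; ring]
        exact pZ_nat _ _ _
      have h1 := p_eq l hl k₁ (l-2) (by omega) (M+1)
      have h2 := p_eq l hl k₁ (l-3) (by omega) M
      have hA : (∑' n : ℕ, (t ((k₁ + 2*n) * l + (l-2)) (M+1) : ℤ)) =
          (∑' n : ℕ, (t ((k₁ + 2*n) * l + (l-2) - 1) M : ℤ)) +
            ∑' n : ℕ, (t ((k₁ + 2*n) * l + (l-2) + 1) M : ℤ) :=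
        tsum_t_rec _ M (fun n => by
          have := le_mul_of_le n (k₁+2*n) l (by omega) (by omega); omega)
      have hB : (∑' m : ℕ, (t ((k₁ + 2*m + 2) * l - (l-2) - 2) (M+1) : ℤ)) =
          (∑' m : ℕ, (t ((k₁ + 2*m + 2) * l - (l-2) - 2 - 1) M : ℤ)) +
            ∑' m : ℕ, (t ((k₁ + 2*m + 2) * l - (l-2) - 2 + 1) M : ℤ) :=
        tsum_t_rec _ M (fun m => by
          have := aux_add_le_mul m (k₁+2*m+2) l hl (by omega); omega)
      have c1 : (∑' n : ℕ, (t ((k₁ + 2*n) * l + (l-2) + 1) M : ℤ)) =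
          ∑' m : ℕ, (t ((k₁ + 2*m + 2) * l - (l-2) - 2 - 1) M : ℤ) :=
        tsum_congr fun m => by
          have e : (k₁ + 2*m + 2) * l = (k₁ + 2*m) * l + 2*l := by ring
          have hb := aux_add_le_mul 0 (k₁+2*m+2) l hl (by omega)
          rw [show (k₁ + 2*m) * l + (l-2) + 1 = (k₁ + 2*m + 2) * l - (l-2) - 2 - 1 by omega]
      have c2 : (∑' n : ℕ, (t ((k₁ + 2*n) * l + (l-2) - 1) M : ℤ)) =
          ∑' n : ℕ, (t ((k₁ + 2*n) * l + (l-3)) M : ℤ) :=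
        tsum_congr fun n => by
          rw [show (k₁ + 2*n) * l + (l-2) - 1 = (k₁ + 2*n) * l + (l-3) by omega]
      have c3 : (∑' m : ℕ, (t ((k₁ + 2*m + 2) * l - (l-2) - 2 + 1) M : ℤ)) =
          ∑' m : ℕ, (t ((k₁ + 2*m + 2) * l - (l-3) - 2) M : ℤ) :=
        tsum_congr fun m => by
          have hb := aux_add_le_mul 0 (k₁+2*m+2) l hl (by omega)
          rw [show (k₁ + 2*m + 2) * l - (l-2) - 2 + 1 = (k₁ + 2*m + 2) * l - (l-3) - 2 by omega]
      rw [h1, hpz, h2, hA, hB, c1, c2, c3]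
      ring
end

section
/- Fix l ≥ 2. For k₁ ∈ ℕ, N ∈ ℕ and k₀ ∈ {0,1,...,l-1}, let A^N_{k₁,k₀} be the set of Catalan paths f of length N with f(N) = k₁l + k₀ − 1 such that for every i with f(i) = k₁l + l − 1 there exists j ∈ {i,...,N} with f(j) = k₁l − 1 (with A^N_{0,0} = ∅). Then: |A^N_{k₁,k₀}| = |A^{N-1}_{k₁,k₀-1}| + |A^{N-1}_{k₁,k₀+1}| if 0 < k₀ < l−1; |A^N_{k₁,l-1}| = |A^{N-1}_{k₁,l-2}|; and |A^N_{k₁,0}| = t(k₁l − 1, N), the total number of Catalan paths of length N ending at height k₁l − 1. -/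
/-- A Catalan path of length `N`: `f : {0,...,N} → ℤ` with `f 0 = 0`, nonnegative values,
and unit steps. -/
def IsCatalanPath (N : ℕ) (f : Fin (N + 1) → ℤ) : Prop :=
  f 0 = 0 ∧ (∀ i, 0 ≤ f i) ∧ ∀ i : Fin N, |f i.succ - f i.castSucc| = 1

/-- The number of Catalan paths of length `N` ending at height `k : ℤ`. -/
noncomputable def tbar (N : ℕ) (k : ℤ) : ℕ :=
  Nat.card {f : Fin (N + 1) → ℤ // IsCatalanPath N f ∧ f (Fin.last N) = k}

/-- `|A^N_{k₁,k₀}|`: the number of partially `l`-bounded Catalan paths of length `N`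
ending at height `k₁·l + k₀ − 1`, i.e. paths such that every visit to height
`k₁·l + l − 1` is eventually followed by a visit to height `k₁·l − 1`. -/
noncomputable def partiallyBoundedCount (l N k₁ k₀ : ℕ) : ℕ :=
  Nat.card {f : Fin (N + 1) → ℤ // IsCatalanPath N f ∧
    f (Fin.last N) = (k₁ * l + k₀ : ℤ) - 1 ∧
    ∀ i : Fin (N + 1), f i = (k₁ * l + l : ℤ) - 1 →
      ∃ j : Fin (N + 1), i ≤ j ∧ f j = (k₁ * l : ℤ) - 1}

namespace Stmt7Aux

/-- The partial boundedness condition. -/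
def Cond (l k₁ : ℕ) {N : ℕ} (f : Fin (N + 1) → ℤ) : Prop :=
  ∀ i : Fin (N + 1), f i = (k₁ * l + l : ℤ) - 1 →
      ∃ j : Fin (N + 1), i ≤ j ∧ f j = (k₁ * l : ℤ) - 1

lemma pbc_eq (l N k₁ k₀ : ℕ) : partiallyBoundedCount l N k₁ k₀ =
    Nat.card {f : Fin (N + 1) → ℤ // IsCatalanPath N f ∧
      f (Fin.last N) = (k₁ * l + k₀ : ℤ) - 1 ∧ Cond l k₁ f} := rfl

lemma catalan_ext {N : ℕ} {f g : Fin (N + 1) → ℤ} (hf : IsCatalanPath N f)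
    (hg : IsCatalanPath N g)
    (h : ∀ i : Fin N, (f i.succ = f i.castSucc + 1 ↔ g i.succ = g i.castSucc + 1)) :
    f = g := by
  funext i
  induction i using Fin.induction with
  | zero => rw [hf.1, hg.1]
  | succ i ih =>
    rcases abs_eq (by norm_num : (0:ℤ) ≤ 1) |>.mp (hf.2.2 i) with h1 | h1
    · have : f i.succ = f i.castSucc + 1 := by linarith
      rw [this, ih, (h i).mp this]
    · have hne : ¬ f i.succ = f i.castSucc + 1 := by intro hc; rw [hc] at h1; linarith
      have hne' : ¬ g i.succ = g i.castSucc + 1 := fun hc => hne ((h i).mpr hc)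
      rcases abs_eq (by norm_num : (0:ℤ) ≤ 1) |>.mp (hg.2.2 i) with h2 | h2
      · exact absurd (by linarith) hne'
      · have : f i.succ = f i.castSucc - 1 := by linarith
        rw [this, ih]; linarith

lemma finite_sub (N : ℕ) (Q : (Fin (N + 1) → ℤ) → Prop) :
    Finite {f : Fin (N + 1) → ℤ // IsCatalanPath N f ∧ Q f} := by
  apply Finite.of_injective
    (fun f : {f : Fin (N + 1) → ℤ // IsCatalanPath N f ∧ Q f} =>
      (fun i : Fin N => (f.1 i.succ = f.1 i.castSucc + 1 : Prop)))
  intro f g hfg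
  apply Subtype.ext
  exact catalan_ext f.2.1 g.2.1 (fun i => iff_of_eq (congrFun hfg i))

variable {l k₁ M : ℕ}

lemma cat_restrict {f : Fin (M + 2) → ℤ} (hf : IsCatalanPath (M + 1) f) :
    IsCatalanPath M (fun i => f i.castSucc) := by
  refine ⟨?_, fun i => hf.2.1 _, fun i => ?_⟩
  · simpa using hf.1
  · have := hf.2.2 i.castSucc
    rwa [Fin.succ_castSucc] at this

lemma cat_snoc {g : Fin (M + 1) → ℤ} (hg : IsCatalanPath M g) (v : ℤ) (hv : 0 ≤ v)
    (hstep : |v - g (Fin.last M)| = 1) : IsCatalanPath (M + 1) (Fin.snoc g v) := by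
  refine ⟨?_, fun i => ?_, fun i => ?_⟩
  · have : (0 : Fin (M + 2)) = (0 : Fin (M + 1)).castSucc := rfl
    rw [this, Fin.snoc_castSucc]; exact hg.1
  · induction i using Fin.lastCases with
    | last => rw [Fin.snoc_last]; exact hv
    | cast i => rw [Fin.snoc_castSucc]; exact hg.2.1 i
  · induction i using Fin.lastCases with
    | last => rw [Fin.succ_last, Fin.snoc_last, Fin.snoc_castSucc]; exact hstep
    | cast i =>
      rw [Fin.succ_castSucc, Fin.snoc_castSucc, Fin.snoc_castSucc]
      exact hg.2.2 i

lemma cond_restrict {f : Fin (M + 2) → ℤ} (hc : Cond l k₁ f)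
    (hlast : f (Fin.last (M + 1)) ≠ (k₁ * l : ℤ) - 1) :
    Cond l k₁ (fun i => f i.castSucc) := by
  intro i hi
  obtain ⟨j, hij, hj⟩ := hc i.castSucc hi
  have hne : j ≠ Fin.last (M + 1) := fun h => hlast (h ▸ hj)
  obtain ⟨j', rfl⟩ := Fin.exists_castSucc_eq.mpr hne
  exact ⟨j', Fin.castSucc_le_castSucc_iff.mp hij, hj⟩

lemma cond_snoc {g : Fin (M + 1) → ℤ} (hc : Cond l k₁ g) (v : ℤ)
    (hv : v ≠ (k₁ * l + l : ℤ) - 1) : Cond l k₁ (Fin.snoc g v) := by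
  intro i hi
  induction i using Fin.lastCases with
  | last => rw [Fin.snoc_last] at hi; exact absurd hi hv
  | cast i =>
    rw [Fin.snoc_castSucc] at hi
    obtain ⟨j, hij, hj⟩ := hc i hi
    exact ⟨j.castSucc, Fin.castSucc_le_castSucc_iff.mpr hij, by rwa [Fin.snoc_castSucc]⟩

/-- Paths of length `M+1` ending at `k₁l+k₀-1` whose second-to-last value is `k₁l+c-1`
are in bijection with partially bounded paths of length `M` ending at `k₁l+c-1`. -/
lemma card_slice (l M k₁ k₀ c : ℕ) (hk₀ : 1 ≤ k₀) (hne : (k₀ : ℤ) ≠ l)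
    (hstep : |(k₀ : ℤ) - c| = 1) :
    Nat.card {f : Fin (M + 2) → ℤ // (IsCatalanPath (M + 1) f ∧
      f (Fin.last (M + 1)) = (k₁ * l + k₀ : ℤ) - 1 ∧ Cond l k₁ f) ∧
      f ((Fin.last M).castSucc) = (k₁ * l + c : ℤ) - 1} =
    partiallyBoundedCount l M k₁ c := by
  rw [pbc_eq]
  apply Nat.card_congr
  have hk0 : (1 : ℤ) ≤ (k₀ : ℤ) := by exact_mod_cast hk₀
  have hstep' : ∀ x : ℤ, x = (k₁ * l + c : ℤ) - 1 →
      |((k₁ * l + k₀ : ℤ) - 1) - x| = 1 := by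
    intro x hx
    rw [hx]
    have : ((k₁ * l + k₀ : ℤ) - 1) - ((k₁ * l + c : ℤ) - 1) = (k₀ : ℤ) - c := by ring
    rw [this]
    exact hstep
  have hnn : (0 : ℤ) ≤ (k₁ * l + k₀ : ℤ) - 1 := by
    have hb : (0:ℤ) ≤ (k₁:ℤ) * l := by positivity
    omega
  refine
  { toFun := fun f => ⟨fun i => f.1 i.castSucc, cat_restrict f.2.1.1, f.2.2,
      cond_restrict f.2.1.2.2 (by rw [f.2.1.2.1]; intro h; omega)⟩
    invFun := fun g => ⟨Fin.snoc g.1 ((k₁ * l + k₀ : ℤ) - 1),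
      ⟨cat_snoc g.2.1 _ hnn (hstep' _ g.2.2.1),
       by rw [Fin.snoc_last],
       cond_snoc g.2.2.2 _ (by intro h; omega)⟩,
      by rw [Fin.snoc_castSucc]; exact g.2.2.1⟩
    left_inv := fun f => by
      apply Subtype.ext
      show Fin.snoc (fun i => f.1 i.castSucc) ((k₁ * l + k₀ : ℤ) - 1) = f.1
      funext i
      induction i using Fin.lastCases with
      | last => rw [Fin.snoc_last, f.2.1.2.1]
      | cast i => rw [Fin.snoc_castSucc]
    right_inv := fun g => by
      apply Subtype.ext
      funext i
      exact Fin.snoc_castSucc (α := fun _ => ℤ) ((k₁ * l + k₀ : ℤ) - 1) g.1 i }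

lemma card_split' {α : Type*} (Q p : α → Prop) (hfin : Finite {x // Q x}) :
    Nat.card {x // Q x} =
      Nat.card {x // Q x ∧ p x} + Nat.card {x // Q x ∧ ¬ p x} := by
  classical
  have e1 : {x // Q x ∧ p x} ≃ {y : {x // Q x} // p y.1} :=
    (Equiv.subtypeSubtypeEquivSubtypeInter Q p).symm
  have e2 : {x // Q x ∧ ¬ p x} ≃ {y : {x // Q x} // ¬ p y.1} :=
    (Equiv.subtypeSubtypeEquivSubtypeInter Q (fun x => ¬ p x)).symm
  rw [Nat.card_congr e1, Nat.card_congr e2, ← Nat.card_sum,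
    Nat.card_congr (Equiv.sumCompl (fun y : {x // Q x} => p y.1))]

/-- The second-to-last value of a path in `A^{M+1}_{k₁,k₀}` is `k₁l+k₀-2` or `k₁l+k₀`. -/
lemma penult {f : Fin (M + 2) → ℤ} (hf : IsCatalanPath (M + 1) f) {h : ℤ}
    (hend : f (Fin.last (M + 1)) = h) :
    f ((Fin.last M).castSucc) = h - 1 ∨ f ((Fin.last M).castSucc) = h + 1 := by
  have := hf.2.2 (Fin.last M)
  rw [Fin.succ_last, hend] at this
  rcases abs_eq (by norm_num : (0:ℤ) ≤ 1) |>.mp this with h1 | h1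
  · left; linarith
  · right; linarith

lemma card_split (l M k₁ k₀ : ℕ) (hk₀ : 1 ≤ k₀) :
    partiallyBoundedCount l (M + 1) k₁ k₀ =
      Nat.card {f : Fin (M + 2) → ℤ // (IsCatalanPath (M + 1) f ∧
        f (Fin.last (M + 1)) = (k₁ * l + k₀ : ℤ) - 1 ∧ Cond l k₁ f) ∧
        f ((Fin.last M).castSucc) = (k₁ * l + (k₀ - 1 : ℕ) : ℤ) - 1} +
      Nat.card {f : Fin (M + 2) → ℤ // (IsCatalanPath (M + 1) f ∧
        f (Fin.last (M + 1)) = (k₁ * l + k₀ : ℤ) - 1 ∧ Cond l k₁ f) ∧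
        f ((Fin.last M).castSucc) = (k₁ * l + (k₀ + 1 : ℕ) : ℤ) - 1} := by
  have hcast : ((k₀ - 1 : ℕ) : ℤ) = (k₀ : ℤ) - 1 := by omega
  rw [pbc_eq]
  rw [card_split' _ (fun f => f ((Fin.last M).castSucc) = (k₁ * l + (k₀ - 1 : ℕ) : ℤ) - 1)
    (finite_sub (M + 1) _)]
  congr 1
  apply Nat.card_congr
  apply Equiv.subtypeEquivRight
  intro f
  constructor
  · rintro ⟨⟨hcat, hend, hcond⟩, hne⟩
    refine ⟨⟨hcat, hend, hcond⟩, ?_⟩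
    rcases penult hcat hend with h1 | h1
    · exact absurd (by rw [h1, hcast]; ring) hne
    · rw [h1]; push_cast; ring
  · rintro ⟨⟨hcat, hend, hcond⟩, hval⟩
    refine ⟨⟨hcat, hend, hcond⟩, ?_⟩
    rw [hval, hcast]
    intro hc
    have : (1 : ℤ) ≤ (k₀ : ℤ) := by exact_mod_cast hk₀
    push_cast at hc
    omega

lemma down_empty (l M k₁ : ℕ) (hl : 2 ≤ l) :
    Nat.card {f : Fin (M + 2) → ℤ // (IsCatalanPath (M + 1) f ∧
      f (Fin.last (M + 1)) = (k₁ * l + (l - 1 : ℕ) : ℤ) - 1 ∧ Cond l k₁ f) ∧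
      f ((Fin.last M).castSucc) = (k₁ * l + ((l - 1 : ℕ) + 1 : ℕ) : ℤ) - 1} = 0 := by
  rw [Nat.card_eq_zero]
  left
  constructor
  rintro ⟨f, ⟨hcat, hend, hcond⟩, hval⟩
  have hl1 : ((l - 1 : ℕ) : ℤ) = (l : ℤ) - 1 := by push_cast [Nat.le_of_lt hl]; ring
  have hval' : f ((Fin.last M).castSucc) = (k₁ * l + l : ℤ) - 1 := by
    rw [hval]; push_cast [hl1]; ring
  obtain ⟨j, hij, hj⟩ := hcond _ hval'
  have hjv : M ≤ j.1 := hij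
  have hjv2 : j.1 < M + 2 := j.isLt
  have hl' : (2 : ℤ) ≤ (l : ℤ) := by exact_mod_cast hl
  rcases Nat.lt_or_ge j.1 (M + 1) with hlt | hge
  · have : j = (Fin.last M).castSucc := by
      apply Fin.ext
      simp only [Fin.coe_castSucc, Fin.val_last]
      omega
    rw [this, hval'] at hj
    omega
  · have : j = Fin.last (M + 1) := by
      apply Fin.ext
      simp only [Fin.val_last]
      omega
    rw [this, hend] at hj
    rw [hl1] at hj
    omega

lemma case_c (l N k₁ : ℕ) :
    partiallyBoundedCount l N k₁ 0 = tbar N ((k₁ * l : ℤ) - 1) := by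
  rw [pbc_eq, tbar]
  apply Nat.card_congr
  apply Equiv.subtypeEquivRight
  intro f
  constructor
  · rintro ⟨hcat, hend, _⟩
    exact ⟨hcat, by rw [hend]; push_cast; ring⟩
  · rintro ⟨hcat, hend⟩
    refine ⟨hcat, by rw [hend]; push_cast; ring, fun i hi => ⟨Fin.last N, Fin.le_last i, ?_⟩⟩
    rw [hend]

end Stmt7Aux

open Stmt7Aux in
theorem stmt_7 (l : ℕ) (hl : 2 ≤ l) (k₁ N : ℕ) (hN : 1 ≤ N) :
    (∀ k₀ : ℕ, 0 < k₀ → k₀ < l - 1 →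
      partiallyBoundedCount l N k₁ k₀ =
        partiallyBoundedCount l (N - 1) k₁ (k₀ - 1) +
          partiallyBoundedCount l (N - 1) k₁ (k₀ + 1)) ∧
    partiallyBoundedCount l N k₁ (l - 1) = partiallyBoundedCount l (N - 1) k₁ (l - 2) ∧
    partiallyBoundedCount l N k₁ 0 = tbar N ((k₁ * l : ℤ) - 1) := by
  obtain ⟨M, rfl⟩ : ∃ M, N = M + 1 := ⟨N - 1, by omega⟩
  have hM : M + 1 - 1 = M := by omega
  rw [hM]
  refine ⟨?_, ?_, case_c l (M + 1) k₁⟩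
  · intro k₀ h1 h2
    rw [card_split l M k₁ k₀ h1,
      card_slice l M k₁ k₀ (k₀ - 1) h1 (by omega)
        (by rw [abs_eq (by norm_num : (0:ℤ) ≤ 1)]; omega),
      card_slice l M k₁ k₀ (k₀ + 1) h1 (by omega)
        (by rw [abs_eq (by norm_num : (0:ℤ) ≤ 1)]; omega)]
  · rw [card_split l M k₁ (l - 1) (by omega),
      card_slice l M k₁ (l - 1) ((l - 1) - 1) (by omega) (by omega)
        (by rw [abs_eq (by norm_num : (0:ℤ) ≤ 1)]; omega),
      down_empty l M k₁ hl]
    have : l - 1 - 1 = l - 2 := by omega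
    rw [this, Nat.add_zero]
end
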